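/- arXiv:1606.07157 — 2 statements merged into one kernel-verified Lean document; each statement's English description precedes it below -/
import Mathlib

section
/- For every integer k, the class of graphs with maximum matching width at most k is closed under taking minors (deleting vertices, deleting edges, and contracting edges). -/
open SimpleGraph

/-- Size of a maximum matching in the bipartite graph of edges of `G` crossing `(A, Aᶜ)`. -/
noncomputable def mmVal {V : Type*} (G : SimpleGraph V) (A : Set V) : ℕ :=
  sSup {n | ∃ M : Finset (V × V),
    (∀ p ∈ M, p.1 ∈ A ∧ p.2 ∉ A ∧ G.Adj p.1 p.2) ∧
    (∀ p ∈ M, ∀ q ∈ M, p ≠ q → p.1 ≠ q.1 ∧ p.2 ≠ q.2) ∧ M.card = n}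

/-- A branch-decomposition over the vertex set of `G`: a finite subcubic tree together with a
bijection between its leaves and the vertices of `G`. -/
structure BranchDecomp {V : Type*} (G : SimpleGraph V) where
  B : Type
  finB : Finite B
  T : SimpleGraph B
  isTree : T.IsTree
  subcubic : ∀ b : B, (T.neighborSet b).ncard = 1 ∨ (T.neighborSet b).ncard = 3
  L : {b : B // (T.neighborSet b).ncard = 1} ≃ V

/-- The set of vertices of `G` whose leaves lie on the `u`-side of the tree edge `uw`. -/
noncomputable def BranchDecomp.side {V : Type*} {G : SimpleGraph V} (D : BranchDecomp G)
    (u w : D.B) : Set V :=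
  {x : V | (D.T.deleteEdges {s(u, w)}).Reachable (D.L.symm x).1 u}

/-- The width of a branch-decomposition is at most `k`. -/
def BranchDecomp.widthLE {V : Type*} {G : SimpleGraph V} (D : BranchDecomp G) (k : ℕ) : Prop :=
  ∀ u w : D.B, D.T.Adj u w → mmVal G (D.side u w) ≤ k

/-- The maximum matching width of `G`. -/
noncomputable def mmw {V : Type*} (G : SimpleGraph V) : ℕ :=
  sInf {k | ∃ D : BranchDecomp G, D.widthLE k}
/-- `H` is a minor of `G`: there is a family of nonempty, pairwise disjoint, connected branch
sets in `G` indexed by the vertices of `H`, with edges of `H` realized by edges of `G`. -/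
def IsMinor {W : Type*} {V : Type*} (H : SimpleGraph W) (G : SimpleGraph V) : Prop :=
  ∃ φ : W → Set V,
    (∀ w, (φ w).Nonempty) ∧
    (∀ w, (G.induce (φ w)).Connected) ∧
    (∀ w w', w ≠ w' → Disjoint (φ w) (φ w')) ∧
    (∀ w w', H.Adj w w' → ∃ a ∈ φ w, ∃ b ∈ φ w', G.Adj a b)

/-- The `k × k` grid graph: vertices `(i, j)`, edges between vertices at Manhattan distance 1. -/
def gridGraph (k : ℕ) : SimpleGraph (Fin k × Fin k) :=
  SimpleGraph.fromRel (fun p q =>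
    (p.1 = q.1 ∧ (p.2 : ℕ) + 1 = (q.2 : ℕ)) ∨ (p.2 = q.2 ∧ (p.1 : ℕ) + 1 = (q.1 : ℕ)))

/-- The row `R_j` of the `k × k` grid. -/
def gridRow (k : ℕ) (j : Fin k) : Set (Fin k × Fin k) := {p | p.2 = j}

/-- The column `C_i` of the `k × k` grid. -/
def gridCol (k : ℕ) (i : Fin k) : Set (Fin k × Fin k) := {p | p.1 = i}

/-- `X` is small: `mm(X) < k` and `X` contains no full row. -/
def GridSmall (k : ℕ) (X : Set (Fin k × Fin k)) : Prop :=
  mmVal (gridGraph k) X < k ∧ ∀ j : Fin k, ¬ gridRow k j ⊆ X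

/-- `G` is `k`-connected: `|V(G)| ≥ k` and deleting fewer than `k` vertices leaves `G`
connected. -/
def KConnected {V : Type*} (k : ℕ) (G : SimpleGraph V) : Prop :=
  k ≤ Nat.card V ∧ ∀ X : Set V, X.ncard < k → (G.induce Xᶜ).Connected

/-- A block of `G`: a bridge (with its two endpoints), or a maximal 2-connected induced
subgraph. -/
def IsBlock {V : Type*} (G : SimpleGraph V) (Bs : Set V) : Prop :=
  (∃ a b : V, G.Adj a b ∧ G.IsBridge s(a, b) ∧ Bs = {a, b}) ∨
  (KConnected 2 (G.induce Bs) ∧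
    ∀ B' : Set V, Bs ⊆ B' → KConnected 2 (G.induce B') → B' = Bs)

/-- A tree-representation of `G`: a finite subcubic tree `T` and nontrivial subtrees `F x`
for each vertex `x` such that adjacent vertices have intersecting subtrees. -/
structure TreeRep {V : Type*} (G : SimpleGraph V) where
  B : Type
  finB : Finite B
  T : SimpleGraph B
  isTree : T.IsTree
  subcubic : ∀ b : B, (T.neighborSet b).ncard = 1 ∨ (T.neighborSet b).ncard = 3
  F : V → Set B
  nontrivial : ∀ x : V, ∃ u w : B, u ∈ F x ∧ w ∈ F x ∧ T.Adj u w
  subtree : ∀ x : V, (T.induce (F x)).Connected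
  adjMeet : ∀ x y : V, G.Adj x y → (F x ∩ F y).Nonempty

/-- Every edge of the tree lies in at most `k` of the subtrees. -/
def TreeRep.widthLE {V : Type*} {G : SimpleGraph V} (R : TreeRep G) (k : ℕ) : Prop :=
  ∀ u w : R.B, R.T.Adj u w → {x : V | u ∈ R.F x ∧ w ∈ R.F x}.ncard ≤ k

/-- Contraction of the edge `uv` of `G` (the merged vertex is `u`). -/
def contractEdge {V : Type*} (G : SimpleGraph V) (u v : V) : SimpleGraph {x : V // x ≠ v} :=
  SimpleGraph.fromRel (fun x y =>
    G.Adj x.1 y.1 ∨ (x.1 = u ∧ G.Adj v y.1) ∨ (y.1 = u ∧ G.Adj v x.1))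

/-!
Let `φ` be a minor model of `H` in `G` and pick `r w ∈ φ w`. For a cut `A` of `G`, each edge `ww'`
of a matching of `H` across `r ⁻¹' A` yields an edge of `G` across `A` inside the connected set
`φ w ∪ φ w'`; these sets are pairwise disjoint, so `mm_H (r ⁻¹' A) ≤ mm_G A`. Relabelling the leaf
of `r w` by `w` in a branch-decomposition of `G` therefore gives cuts of `H` of width at most `k`.
The leaves not of the form `r w` are removed one at a time: delete such a leaf `b` with its
neighbour `c` and join the two other neighbours of `c`; every cut of the new tree is the
restriction of a cut of the old one.

As `mmw` is an `sInf`, `mmw G ≤ k` yields a decomposition only if one exists, i.e. if `G` has at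
least two vertices (cubic trees with any number `≥ 2` of leaves are grown by attaching cherries);
graphs with fewer vertices have no decomposition and `mmw = 0`.
-/

namespace SimpleGraph

variable {V V' : Type*} {G : SimpleGraph V}

theorem Reachable.lift {G' : SimpleGraph V'} (f : V → V')
    (h : ∀ ⦃x y⦄, G.Adj x y → G'.Reachable (f x) (f y)) {x y : V} (hxy : G.Reachable x y) :
    G'.Reachable (f x) (f y) := by
  rw [reachable_iff_reflTransGen] at hxy ⊢
  exact hxy.lift' f fun a b hab => (reachable_iff_reflTransGen _ _).1 (h hab)

theorem Preconnected.eq_or_eq_of_neighborSet_eq {b c : V} (hG : G.Preconnected)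
    (hb : G.neighborSet b = {c}) (hc : G.neighborSet c = {b}) (z : V) : z = b ∨ z = c := by
  have hreach := (reachable_iff_reflTransGen _ _).1 (hG b z)
  induction hreach with
  | refl => exact Or.inl rfl
  | tail _ hadj ih =>
    rcases ih with rfl | rfl
    · exact Or.inr (hb ▸ hadj : _ ∈ ({c} : Set V))
    · exact Or.inl (hc ▸ hadj : _ ∈ ({b} : Set V))

theorem exists_adj_of_induce_connected {U A : Set V} (hU : (G.induce U).Connected) {a b : V}
    (haU : a ∈ U) (hbU : b ∈ U) (ha : a ∈ A) (hb : b ∉ A) :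
    ∃ x y, G.Adj x y ∧ x ∈ U ∧ y ∈ U ∧ x ∈ A ∧ y ∉ A := by
  obtain ⟨p⟩ := hU.preconnected ⟨a, haU⟩ ⟨b, hbU⟩
  obtain ⟨d, -, hd₁, hd₂⟩ := p.exists_boundary_dart (Subtype.val ⁻¹' A) ha hb
  exact ⟨d.fst, d.snd, d.adj, d.fst.2, d.snd.2, hd₁, hd₂⟩

theorem induce_union_connected_of_adj {s t : Set V} (hs : (G.induce s).Connected)
    (ht : (G.induce t).Connected) {a b : V} (ha : a ∈ s) (hb : b ∈ t) (hab : G.Adj a b) :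
    (G.induce (s ∪ t)).Connected := by
  have hsab := induce_union_connected hs.preconnected
    (induce_pair_connected_of_adj hab).preconnected ⟨a, ha, by simp⟩
  have := induce_union_connected hsab.preconnected ht.preconnected ⟨b, by simp, hb⟩
  have hst : s ∪ {a, b} ∪ t = s ∪ t := by
    ext x
    simp only [Set.mem_union, Set.mem_insert_iff, Set.mem_singleton_iff]
    grind
  rwa [hst] at this

end SimpleGraph

section MatchingWidth

variable {V : Type*}

def IsCrossMatching (G : SimpleGraph V) (A : Set V) (M : Finset (V × V)) : Prop :=
  (∀ p ∈ M, p.1 ∈ A ∧ p.2 ∉ A ∧ G.Adj p.1 p.2) ∧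
    (∀ p ∈ M, ∀ q ∈ M, p ≠ q → p.1 ≠ q.1 ∧ p.2 ≠ q.2)

theorem mmVal_eq_sSup (G : SimpleGraph V) (A : Set V) :
    mmVal G A = sSup {n | ∃ M, IsCrossMatching G A M ∧ M.card = n} := by
  simp only [mmVal, IsCrossMatching, and_assoc]

theorem IsCrossMatching.card_le [Finite V] {G : SimpleGraph V} {A : Set V} {M : Finset (V × V)}
    (hM : IsCrossMatching G A M) : M.card ≤ Nat.card V := by
  classical
  have := Fintype.ofFinite V
  have hinj : Set.InjOn Prod.fst (M : Set (V × V)) := fun p hp q hq hpq =>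
    of_not_not fun hne => (hM.2 p hp q hq hne).1 hpq
  rw [← Finset.card_image_of_injOn hinj, Nat.card_eq_fintype_card]
  exact Finset.card_le_univ _

theorem IsCrossMatching.card_le_mmVal [Finite V] {G : SimpleGraph V} {A : Set V}
    {M : Finset (V × V)} (hM : IsCrossMatching G A M) : M.card ≤ mmVal G A := by
  rw [mmVal_eq_sSup]
  exact le_csSup ⟨Nat.card V, by rintro _ ⟨M, hM, rfl⟩; exact hM.card_le⟩ ⟨M, hM, rfl⟩

theorem mmVal_le {G : SimpleGraph V} {A : Set V} {m : ℕ}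
    (h : ∀ M, IsCrossMatching G A M → M.card ≤ m) : mmVal G A ≤ m := by
  rw [mmVal_eq_sSup]
  exact csSup_le ⟨0, ∅, by simp [IsCrossMatching]⟩ (by rintro _ ⟨M, hM, rfl⟩; exact h M hM)

theorem mmVal_le_card [Finite V] (G : SimpleGraph V) (A : Set V) : mmVal G A ≤ Nat.card V :=
  mmVal_le fun _ hM => hM.card_le

end MatchingWidth

section MinorCut

variable {V W : Type*} {G : SimpleGraph V} {H : SimpleGraph W} {φ : W → Set V} {r : W → V}
  {A : Set V}

theorem exists_cross_adj_of_branchSets (hconn : ∀ w, (G.induce (φ w)).Connected)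
    (hadj : ∀ w w', H.Adj w w' → ∃ a ∈ φ w, ∃ b ∈ φ w', G.Adj a b) (hr : ∀ w, r w ∈ φ w)
    {w w' : W} (hww' : H.Adj w w') (hw : r w ∈ A) (hw' : r w' ∉ A) :
    ∃ q : V × V, q.1 ∈ φ w ∪ φ w' ∧ q.2 ∈ φ w ∪ φ w' ∧ q.1 ∈ A ∧ q.2 ∉ A ∧ G.Adj q.1 q.2 := by
  obtain ⟨a, ha, b, hb, hab⟩ := hadj _ _ hww'
  obtain ⟨x, y, hxy, hx, hy, hxA, hyA⟩ := exists_adj_of_induce_connected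
    (induce_union_connected_of_adj (hconn w) (hconn w') ha hb hab) (.inl (hr w)) (.inr (hr w'))
    hw hw'
  exact ⟨(x, y), hx, hy, hxA, hyA, hxy⟩

theorem IsCrossMatching.disjoint_branchSets {M : Finset (W × W)}
    (hM : IsCrossMatching H (r ⁻¹' A) M) (hdisj : ∀ w w', w ≠ w' → Disjoint (φ w) (φ w'))
    {p q : W × W} (hp : p ∈ M) (hq : q ∈ M) (hpq : p ≠ q) :
    Disjoint (φ p.1 ∪ φ p.2) (φ q.1 ∪ φ q.2) := by
  obtain ⟨h₁₁, h₂₂⟩ := hM.2 p hp q hq hpq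
  have h₁₂ : p.1 ≠ q.2 := fun h => (hM.1 q hq).2.1 (h ▸ (hM.1 p hp).1)
  have h₂₁ : p.2 ≠ q.1 := fun h => (hM.1 p hp).2.1 (h ▸ (hM.1 q hq).1)
  simp only [Set.disjoint_union_left, Set.disjoint_union_right]
  exact ⟨⟨hdisj _ _ h₁₁, hdisj _ _ h₂₁⟩, hdisj _ _ h₁₂, hdisj _ _ h₂₂⟩

theorem mmVal_preimage_le_of_branchSets [Finite V] (hconn : ∀ w, (G.induce (φ w)).Connected)
    (hdisj : ∀ w w', w ≠ w' → Disjoint (φ w) (φ w'))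
    (hadj : ∀ w w', H.Adj w w' → ∃ a ∈ φ w, ∃ b ∈ φ w', G.Adj a b) (hr : ∀ w, r w ∈ φ w)
    (A : Set V) : mmVal H (r ⁻¹' A) ≤ mmVal G A := by
  classical
  refine mmVal_le fun M hM => ?_
  obtain rfl | ⟨p₀, -⟩ := M.eq_empty_or_nonempty
  · simp
  have : Nonempty V := ⟨r p₀.1⟩
  choose! g hg using fun p hp =>
    exists_cross_adj_of_branchSets hconn hadj hr (hM.1 p hp).2.2 (hM.1 p hp).1 (hM.1 p hp).2.1
  have hne : ∀ p ∈ M, ∀ q ∈ M, p ≠ q → (g p).1 ≠ (g q).1 ∧ (g p).2 ≠ (g q).2 :=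
    fun p hp q hq hpq => have hsep := hM.disjoint_branchSets hdisj hp hq hpq
      ⟨fun h => Set.disjoint_left.1 hsep (hg p hp).1 (h ▸ (hg q hq).1),
        fun h => Set.disjoint_left.1 hsep (hg p hp).2.1 (h ▸ (hg q hq).2.1)⟩
  have hinj : Set.InjOn g M := fun p hp q hq hpq =>
    of_not_not fun hpq' => (hne p hp q hq hpq').1 (congrArg Prod.fst hpq)
  rw [← Finset.card_image_of_injOn hinj]
  refine IsCrossMatching.card_le_mmVal ⟨?_, ?_⟩
  · simp only [Finset.mem_image, forall_exists_index, and_imp]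
    rintro _ p hp rfl
    exact (hg p hp).2.2
  · simp only [Finset.mem_image, forall_exists_index, and_imp]
    rintro _ p hp rfl _ q hq rfl hpq
    exact hne p hp q hq fun h => hpq (h ▸ rfl)

end MinorCut

namespace SimpleGraph

variable {B : Type*} {T : SimpleGraph B}

def IsSubcubicTree (T : SimpleGraph B) : Prop :=
  T.IsTree ∧ ∀ b, (T.neighborSet b).ncard = 1 ∨ (T.neighborSet b).ncard = 3

theorem isTree_iff_connected_and_sum_ncard [Fintype B] :
    T.IsTree ↔ T.Connected ∧ ∑ v, (T.neighborSet v).ncard + 2 = 2 * Fintype.card B := by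
  classical
  have hdeg : ∀ v, (T.neighborSet v).ncard = T.degree v := fun v => by
    rw [Set.ncard_eq_toFinset_card', ← card_neighborFinset_eq_degree, neighborFinset_def]
  simp only [hdeg, sum_degrees_eq_twice_card_edges, isTree_iff_connected_and_card,
    Nat.card_eq_fintype_card, ← edgeFinset_card]
  exact and_congr_right fun _ => ⟨fun h => by omega, fun h => by omega⟩

theorem IsSubcubicTree.two_mul_card_leaves [Finite B] (hT : T.IsSubcubicTree) :
    2 * Nat.card {b // (T.neighborSet b).ncard = 1} = Nat.card B + 2 := by
  classical
  have := Fintype.ofFinite B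
  have hsum := ((isTree_iff_connected_and_sum_ncard (T := T)).1 hT.1).2
  have hsplit : ∑ v, (T.neighborSet v).ncard =
      ∑ v, (if (T.neighborSet v).ncard = 1 then 1 else 3) :=
    Finset.sum_congr rfl fun v _ => by rcases hT.2 v with h | h <;> simp [h]
  rw [hsplit, Finset.sum_ite, Finset.sum_const, Finset.sum_const, smul_eq_mul, smul_eq_mul,
    Finset.filter_not, Finset.card_sdiff_of_subset (Finset.filter_subset _ _),
    Finset.card_univ] at hsum
  have hle := Finset.card_filter_le (Finset.univ : Finset B)
    fun v => (T.neighborSet v).ncard = 1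
  rw [Finset.card_univ] at hle
  rw [Nat.card_eq_fintype_card, Nat.card_eq_fintype_card, Fintype.card_subtype]
  omega

end SimpleGraph

theorem BranchDecomp.two_le_card {V : Type*} {G : SimpleGraph V} (D : BranchDecomp G) :
    2 ≤ Nat.card V := by
  have := D.finB
  have : Nonempty D.B := D.isTree.connected.nonempty
  have := (IsSubcubicTree.two_mul_card_leaves (T := D.T) ⟨D.isTree, D.subcubic⟩).trans_ge
    (Nat.add_le_add_right Nat.card_pos 2)
  rw [← Nat.card_congr D.L]
  omega

namespace SimpleGraph

section AttachCherry

variable {B : Type*}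

def attachCherry (T : SimpleGraph B) (ℓ : B) : SimpleGraph (B ⊕ Bool) where
  Adj
    | .inl a, .inl a' => T.Adj a a'
    | .inl a, .inr _ => a = ℓ
    | .inr _, .inl a => a = ℓ
    | .inr _, .inr _ => False
  symm.symm := by
    rintro (a | t) (a' | t') h
    exacts [h.symm, h, h, h]
  loopless.irrefl := by
    rintro (a | t) h
    exacts [T.loopless.irrefl a h, h]

variable {T : SimpleGraph B} {ℓ : B}

theorem neighborSet_attachCherry_inr (t : Bool) :
    (T.attachCherry ℓ).neighborSet (.inr t) = {.inl ℓ} := by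
  ext (a | t') <;> simp [attachCherry, eq_comm]

theorem ncard_neighborSet_attachCherry_inl [Finite B] [DecidableEq B] (a : B) :
    ((T.attachCherry ℓ).neighborSet (.inl a)).ncard =
      (T.neighborSet a).ncard + if a = ℓ then 2 else 0 := by
  split_ifs with ha
  · have : (T.attachCherry ℓ).neighborSet (.inl a) =
        .inl '' T.neighborSet a ∪ Set.range .inr := by
      ext (a' | t) <;> simp [attachCherry, ha]
    rw [this, Set.ncard_union_eq (by simp [Set.disjoint_left]),
      Set.ncard_image_of_injective _ Sum.inl_injective,
      Set.ncard_range_of_injective Sum.inr_injective, Nat.card_eq_fintype_card,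
      Fintype.card_bool]
  · have : (T.attachCherry ℓ).neighborSet (.inl a) = .inl '' T.neighborSet a := by
      ext (a' | t) <;> simp [attachCherry, ha]
    rw [this, Set.ncard_image_of_injective _ Sum.inl_injective, add_zero]

theorem Connected.attachCherry (hT : T.Connected) : (T.attachCherry ℓ).Connected := by
  let f : T →g T.attachCherry ℓ := ⟨Sum.inl, id⟩
  refine (connected_iff_exists_forall_reachable _).2 ⟨.inl ℓ, ?_⟩
  rintro (a | t)
  · exact (hT.preconnected ℓ a).map f
  · exact Adj.reachable (rfl : ℓ = ℓ)

theorem IsSubcubicTree.attachCherry [Finite B] (hT : T.IsSubcubicTree)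
    (hℓ : (T.neighborSet ℓ).ncard = 1) : (T.attachCherry ℓ).IsSubcubicTree := by
  classical
  have := Fintype.ofFinite B
  refine ⟨isTree_iff_connected_and_sum_ncard.2 ⟨hT.1.connected.attachCherry, ?_⟩, ?_⟩
  · have hsum := (isTree_iff_connected_and_sum_ncard.1 hT.1).2
    simp only [Fintype.sum_sum_type, ncard_neighborSet_attachCherry_inl,
      neighborSet_attachCherry_inr, Set.ncard_singleton, Finset.sum_add_distrib,
      Finset.sum_ite_eq', Finset.mem_univ, if_true, Fintype.card_sum, Fintype.card_bool,
      Finset.sum_const, Finset.card_univ, smul_eq_mul, mul_one]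
    omega
  · rintro (a | t)
    · rw [ncard_neighborSet_attachCherry_inl]
      split_ifs with ha
      · exact .inr (by rw [ha, hℓ])
      · simpa using hT.2 a
    · simp [neighborSet_attachCherry_inr]

end AttachCherry

end SimpleGraph

theorem exists_isSubcubicTree_card (m : ℕ) :
    ∃ (B : Type) (_ : Finite B) (T : SimpleGraph B),
      T.IsSubcubicTree ∧ Nat.card B = 2 * m + 2 := by
  induction m with
  | zero =>
    refine ⟨Bool, inferInstance, ⊤, ⟨isTree_iff_connected_and_sum_ncard.2 ⟨connected_top, ?_⟩,
      fun b => .inl ?_⟩, by simp⟩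
    · simp [neighborSet_top]
    · simp [neighborSet_top]
  | succ m ih =>
    obtain ⟨B, _, T, hT, hcard⟩ := ih
    have hL := hT.two_mul_card_leaves
    obtain ⟨⟨ℓ, hℓ⟩⟩ : Nonempty {b // (T.neighborSet b).ncard = 1} :=
      (Nat.card_pos_iff.1 (by omega)).1
    exact ⟨B ⊕ Bool, inferInstance, T.attachCherry ℓ, hT.attachCherry hℓ, by
      rw [Nat.card_sum, hcard, Nat.card_eq_fintype_card, Fintype.card_bool]; ring⟩

theorem nonempty_branchDecomp {V : Type} [Finite V] (G : SimpleGraph V)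
    (hV : 2 ≤ Nat.card V) : Nonempty (BranchDecomp G) := by
  obtain ⟨B, _, T, hT, hcard⟩ := exists_isSubcubicTree_card (Nat.card V - 2)
  have hL := hT.two_mul_card_leaves
  obtain ⟨L⟩ := Finite.card_eq.1 (show Nat.card {b // (T.neighborSet b).ncard = 1} = Nat.card V
    by omega)
  exact ⟨⟨B, inferInstance, T, hT.1, hT.2, L⟩⟩

theorem Sym2.mk_val_eq_mk_val {α : Type*} {p : α → Prop} {x y u w : Subtype p} :
    s(x.1, y.1) = s(u.1, w.1) ↔ s(x, y) = s(u, w) := by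
  simpa only [Sym2.map_mk] using (Sym2.map.injective Subtype.val_injective).eq_iff
    (a := s(x, y)) (b := s(u, w))

namespace SimpleGraph

def edgeSide {B : Type*} (T : SimpleGraph B) (u w : B) : Set B :=
  {z | (T.deleteEdges {s(u, w)}).Reachable z u}

section PruneLeaf

variable {B : Type*}

/-- For a leaf `b` whose neighbour `c` has the further neighbours `d` and `e`: delete `b` and `c`
and join `d` to `e`. -/
def pruneLeaf (T : SimpleGraph B) (b c : B) (d e : ({b, c}ᶜ : Set B)) :
    SimpleGraph ({b, c}ᶜ : Set B) :=
  T.induce {b, c}ᶜ ⊔ edge d e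

open Classical in
noncomputable def pruneLeafRetract {b c : B} (d : ({b, c}ᶜ : Set B)) (z : B) : ({b, c}ᶜ : Set B) :=
  if h : z ∈ ({b, c}ᶜ : Set B) then ⟨z, h⟩ else d

variable {T : SimpleGraph B} {b c : B} {d e : ({b, c}ᶜ : Set B)}

theorem pruneLeaf_comm : T.pruneLeaf b c d e = T.pruneLeaf b c e d := by
  rw [pruneLeaf, pruneLeaf, edge_comm]

theorem pruneLeaf_adj (hde : d ≠ e) {x y : ({b, c}ᶜ : Set B)} :
    (T.pruneLeaf b c d e).Adj x y ↔ T.Adj x y ∨ s(x, y) = s(d, e) := by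
  rw [pruneLeaf, sup_adj, induce_adj, edge_adj, Sym2.eq_iff]
  refine or_congr_right ⟨And.left, fun h => ⟨h, ?_⟩⟩
  rcases h with ⟨rfl, rfl⟩ | ⟨rfl, rfl⟩
  exacts [hde, hde.symm]

theorem pruneLeafRetract_val (x : ({b, c}ᶜ : Set B)) : pruneLeafRetract d x.1 = x :=
  dif_pos x.2

theorem pruneLeafRetract_left : pruneLeafRetract d b = d := dif_neg (by simp)

theorem pruneLeafRetract_right : pruneLeafRetract d c = d := dif_neg (by simp)

theorem pruneLeafRetract_eq_or_of_adj_of_notMem (hb : T.neighborSet b = {c})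
    (hc : T.neighborSet c = {b, d.1, e.1}) {p q : B} (hpq : T.Adj p q)
    (hp : p ∉ ({b, c}ᶜ : Set B)) :
    pruneLeafRetract d p = pruneLeafRetract d q ∨ s(p, q) = s(c, e.1) := by
  simp only [Set.mem_compl_iff, Set.mem_insert_iff, Set.mem_singleton_iff, not_not] at hp
  rcases hp with rfl | rfl
  · obtain rfl : q = c := (hb ▸ hpq : q ∈ ({c} : Set B))
    exact .inl (pruneLeafRetract_left.trans pruneLeafRetract_right.symm)
  · rcases (hc ▸ hpq : q ∈ ({b, d.1, e.1} : Set B)) with rfl | rfl | rfl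
    · exact .inl (pruneLeafRetract_right.trans pruneLeafRetract_left.symm)
    · exact .inl (pruneLeafRetract_right.trans (pruneLeafRetract_val d).symm)
    · exact .inr rfl

theorem pruneLeafRetract_of_adj (hb : T.neighborSet b = {c})
    (hc : T.neighborSet c = {b, d.1, e.1}) {p q : B} (hpq : T.Adj p q) :
    pruneLeafRetract d p = pruneLeafRetract d q ∨ (p ∈ ({b, c}ᶜ : Set B) ∧ q ∈ ({b, c}ᶜ : Set B)) ∨
      s(p, q) = s(c, e.1) := by
  by_cases hp : p ∈ ({b, c}ᶜ : Set B)
  · by_cases hq : q ∈ ({b, c}ᶜ : Set B)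
    · exact .inr (.inl ⟨hp, hq⟩)
    · rcases pruneLeafRetract_eq_or_of_adj_of_notMem hb hc hpq.symm hq with h | h
      · exact .inl h.symm
      · exact .inr (.inr (Sym2.eq_swap.trans h))
  · exact (pruneLeafRetract_eq_or_of_adj_of_notMem hb hc hpq hp).imp_right .inr

theorem Reachable.map_pruneLeafRetract (hb : T.neighborSet b = {c})
    (hc : T.neighborSet c = {b, d.1, e.1}) (hde : d ≠ e) {E₀ : Set (Sym2 B)}
    {E : Set (Sym2 ({b, c}ᶜ : Set B))}
    (hE : ∀ x y : ({b, c}ᶜ : Set B), T.Adj x y → s(x.1, y.1) ∉ E₀ → s(x, y) ∉ E)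
    (hde₀ : s(c, e.1) ∉ E₀ → s(d, e) ∉ E) {p q : B} (hpq : (T.deleteEdges E₀).Reachable p q) :
    ((T.pruneLeaf b c d e).deleteEdges E).Reachable (pruneLeafRetract d p)
      (pruneLeafRetract d q) := by
  refine hpq.lift _ fun p q hadj => ?_
  rw [deleteEdges_adj] at hadj
  rcases pruneLeafRetract_of_adj hb hc hadj.1 with h | ⟨hp, hq⟩ | h
  · rw [h]
  · lift p to ({b, c}ᶜ : Set B) using hp
    lift q to ({b, c}ᶜ : Set B) using hq
    rw [pruneLeafRetract_val, pruneLeafRetract_val]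
    exact Adj.reachable
      (deleteEdges_adj.2 ⟨(pruneLeaf_adj hde).2 (.inl hadj.1), hE _ _ hadj.1 hadj.2⟩)
  · have hdE : ((T.pruneLeaf b c d e).deleteEdges E).Adj d e :=
      deleteEdges_adj.2 ⟨(pruneLeaf_adj hde).2 (.inr rfl), hde₀ (h ▸ hadj.2)⟩
    rcases Sym2.eq_iff.1 h with ⟨hp, hq⟩ | ⟨hp, hq⟩
    · rw [hp, hq, pruneLeafRetract_right, pruneLeafRetract_val]
      exact hdE.reachable
    · rw [hp, hq, pruneLeafRetract_right, pruneLeafRetract_val]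
      exact hdE.reachable.symm

theorem Reachable.of_pruneLeaf (hde : d ≠ e) {E₀ : Set (Sym2 B)}
    {E : Set (Sym2 ({b, c}ᶜ : Set B))}
    (hE : ∀ x y : ({b, c}ᶜ : Set B), T.Adj x y → s(x, y) ∉ E → s(x.1, y.1) ∉ E₀)
    (hde₀ : s(d, e) ∉ E → (T.deleteEdges E₀).Reachable d e) {x y : ({b, c}ᶜ : Set B)}
    (hxy : ((T.pruneLeaf b c d e).deleteEdges E).Reachable x y) :
    (T.deleteEdges E₀).Reachable x y :=
  hxy.lift Subtype.val fun x y hadj => by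
    rw [deleteEdges_adj, pruneLeaf_adj hde] at hadj
    obtain ⟨h | h, hxyE⟩ := hadj
    · exact Adj.reachable (deleteEdges_adj.2 ⟨h, hE _ _ h hxyE⟩)
    · rcases Sym2.eq_iff.1 h with ⟨rfl, rfl⟩ | ⟨rfl, rfl⟩
      · exact hde₀ hxyE
      · exact (hde₀ (Sym2.eq_swap ▸ hxyE)).symm

theorem adj_of_neighborSet_eq_insert_pair_left {T : SimpleGraph B} {b c x y : B}
    (hc : T.neighborSet c = {b, x, y}) : T.Adj c x :=
  (hc ▸ (by simp) : x ∈ T.neighborSet c)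

theorem adj_of_neighborSet_eq_insert_pair_right {T : SimpleGraph B} {b c x y : B}
    (hc : T.neighborSet c = {b, x, y}) : T.Adj c y :=
  (hc ▸ (by simp) : y ∈ T.neighborSet c)

theorem IsAcyclic.not_adj_of_adj_of_adj {T : SimpleGraph B} (hT : T.IsAcyclic) {c d e : B}
    (hcd : T.Adj c d) (hce : T.Adj c e) : ¬ T.Adj d e := fun hde => by
  classical
  exact hT.cliqueFree le_rfl {c, d, e} (is3Clique_triple_iff.2 ⟨hcd, hce, hde⟩)

theorem val_ne_left (x : ({b, c}ᶜ : Set B)) : x.1 ≠ b := fun h => x.2 (by simp [h])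

theorem val_ne_right (x : ({b, c}ᶜ : Set B)) : x.1 ≠ c := fun h => x.2 (by simp [h])

theorem mk_val_ne_mk_right (x y : ({b, c}ᶜ : Set B)) (z : B) : s(x.1, y.1) ≠ s(c, z) := by
  intro h
  rcases Sym2.eq_iff.1 h with ⟨h, -⟩ | ⟨-, h⟩
  exacts [val_ne_right x h, val_ne_right y h]

theorem Adj.deleteEdges_mk_of_ne {T : SimpleGraph B} {c d e : B} (hcd : T.Adj c d)
    (hde : d ≠ e) : (T.deleteEdges {s(c, e)}).Adj c d :=
  deleteEdges_adj.2 ⟨hcd, fun h => hde (Sym2.congr_right.1 h)⟩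

theorem reachable_deleteEdges_pruneLeaf_iff_of_adj (hT : T.IsAcyclic)
    (hb : T.neighborSet b = {c}) (hc : T.neighborSet c = {b, d.1, e.1}) (hde : d ≠ e)
    {u w : ({b, c}ᶜ : Set B)} (huw : T.Adj u w) (x : ({b, c}ᶜ : Set B)) :
    ((T.pruneLeaf b c d e).deleteEdges {s(u, w)}).Reachable x u ↔
      (T.deleteEdges {s(u.1, w.1)}).Reachable x u := by
  have hcd := adj_of_neighborSet_eq_insert_pair_left hc
  have hce := adj_of_neighborSet_eq_insert_pair_right hc
  constructor
  · refine Reachable.of_pruneLeaf hde (fun x y _ hxy hxy₀ => hxy ?_) fun _ => ?_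
    · rw [Set.mem_singleton_iff] at hxy₀ ⊢
      exact Sym2.mk_val_eq_mk_val.1 hxy₀
    · have hc_ne : ∀ z : B, s(c, z) ∉ ({s(u.1, w.1)} : Set (Sym2 B)) := fun z h =>
        mk_val_ne_mk_right u w z (Set.mem_singleton_iff.1 h).symm
      exact (Adj.reachable (deleteEdges_adj.2 ⟨hcd, hc_ne d⟩)).symm.trans
        (Adj.reachable (deleteEdges_adj.2 ⟨hce, hc_ne e⟩))
  · intro h
    have := h.map_pruneLeafRetract hb hc hde (E := {s(u, w)})
      (fun x y _ hxy₀ hxy =>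
        hxy₀ (Set.mem_singleton_iff.2 (Sym2.mk_val_eq_mk_val.2 (Set.mem_singleton_iff.1 hxy))))
      (fun _ h => hT.not_adj_of_adj_of_adj hcd hce
        ((T.mem_edgeSet).1 (Sym2.mk_val_eq_mk_val.2 h ▸ (T.mem_edgeSet).2 huw)))
    rwa [pruneLeafRetract_val, pruneLeafRetract_val] at this

theorem reachable_deleteEdges_pruneLeaf_iff_of_eq (hT : T.IsAcyclic)
    (hb : T.neighborSet b = {c}) (hc : T.neighborSet c = {b, d.1, e.1}) (hde : d ≠ e)
    (x : ({b, c}ᶜ : Set B)) :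
    ((T.pruneLeaf b c d e).deleteEdges {s(d, e)}).Reachable x d ↔
      (T.deleteEdges {s(c, e.1)}).Reachable x c := by
  have hcd := adj_of_neighborSet_eq_insert_pair_left hc
  have hce := adj_of_neighborSet_eq_insert_pair_right hc
  constructor
  · intro h
    exact (h.of_pruneLeaf hde (E₀ := {s(c, e.1)}) (E := {s(d, e)})
      (fun x y _ _ => mk_val_ne_mk_right x y e) fun h => absurd rfl h).trans
      (hcd.deleteEdges_mk_of_ne (Subtype.coe_ne_coe.2 hde)).reachable.symm
  · intro h
    have := h.map_pruneLeafRetract hb hc hde (E₀ := {s(c, e.1)}) (E := {s(d, e)})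
      (fun x y hxy _ h => hT.not_adj_of_adj_of_adj hcd hce
        ((T.mem_edgeSet).1 (Sym2.mk_val_eq_mk_val.2 (Set.mem_singleton_iff.1 h) ▸
          (T.mem_edgeSet).2 hxy)))
      fun h => absurd rfl h
    rwa [pruneLeafRetract_val, pruneLeafRetract_right] at this

/-- Old edges keep their sides; the new edge `de` inherits the sides of `ce`. -/
theorem exists_edgeSide_pruneLeaf_eq_preimage (hT : T.IsAcyclic)
    (hb : T.neighborSet b = {c}) (hc : T.neighborSet c = {b, d.1, e.1}) (hde : d ≠ e)
    {u w : ({b, c}ᶜ : Set B)} (huw : (T.pruneLeaf b c d e).Adj u w) :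
    ∃ u₀ w₀, T.Adj u₀ w₀ ∧
      (T.pruneLeaf b c d e).edgeSide u w = Subtype.val ⁻¹' T.edgeSide u₀ w₀ := by
  have hcd := adj_of_neighborSet_eq_insert_pair_left hc
  have hce := adj_of_neighborSet_eq_insert_pair_right hc
  rcases (pruneLeaf_adj hde).1 huw with h | h
  · exact ⟨u, w, h, Set.ext (reachable_deleteEdges_pruneLeaf_iff_of_adj hT hb hc hde h)⟩
  rcases Sym2.eq_iff.1 h with ⟨rfl, rfl⟩ | ⟨rfl, rfl⟩
  · exact ⟨c, w, hce, Set.ext (reachable_deleteEdges_pruneLeaf_iff_of_eq hT hb hc hde)⟩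
  · rw [pruneLeaf_comm]
    exact ⟨c, w, hcd, Set.ext (reachable_deleteEdges_pruneLeaf_iff_of_eq hT hb
      (by rw [hc, Set.pair_comm]) hde.symm)⟩

theorem IsTree.pruneLeaf (hT : T.IsTree) (hb : T.neighborSet b = {c})
    (hc : T.neighborSet c = {b, d.1, e.1}) (hde : d ≠ e) : (T.pruneLeaf b c d e).IsTree := by
  have hcd := adj_of_neighborSet_eq_insert_pair_left hc
  have hce := adj_of_neighborSet_eq_insert_pair_right hc
  refine ⟨(connected_iff_exists_forall_reachable _).2 ⟨d, fun x => ?_⟩, ?_⟩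
  · have hdx : (T.deleteEdges ∅).Reachable d x := by
      rw [deleteEdges_empty]
      exact hT.connected.preconnected d x
    simpa only [deleteEdges_empty, pruneLeafRetract_val] using
      hdx.map_pruneLeafRetract hb hc hde (E := ∅) (fun _ _ _ _ h => h) fun _ h => h
  · refine (hT.isAcyclic.induce _).sup_edge_of_not_reachable fun hde' => ?_
    let hval : T.induce {b, c}ᶜ →g T.deleteEdges {s(c, e.1)} :=
      ⟨Subtype.val, fun {x y} hxy => deleteEdges_adj.2 ⟨hxy, mk_val_ne_mk_right x y e⟩⟩
    exact isAcyclic_iff_forall_adj_isBridge.1 hT.isAcyclic hce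
      ((hcd.deleteEdges_mk_of_ne (Subtype.coe_ne_coe.2 hde)).reachable.trans
        (hde'.map hval : (T.deleteEdges _).Reachable d e))

theorem image_val_neighborSet_pruneLeaf_left (hb : T.neighborSet b = {c}) (hde : d ≠ e) :
    Subtype.val '' (T.pruneLeaf b c d e).neighborSet d = insert e.1 (T.neighborSet d \ {c}) := by
  ext y
  simp only [Set.mem_image, mem_neighborSet, pruneLeaf_adj hde, Set.mem_insert_iff,
    Set.mem_sdiff, Set.mem_singleton_iff]
  constructor
  · rintro ⟨y, h | h, rfl⟩
    · exact .inr ⟨h, val_ne_right y⟩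
    · exact .inl (congrArg Subtype.val (Sym2.congr_right.1 h))
  · rintro (rfl | ⟨h, hyc⟩)
    · exact ⟨e, .inr rfl, rfl⟩
    · have hyb : y ≠ b := fun hyb => val_ne_right d <| by
        have hdb : T.Adj b d := hyb ▸ h.symm
        rwa [← mem_neighborSet, hb] at hdb
      exact ⟨⟨y, by simp [hyb, hyc]⟩, .inl h, rfl⟩

theorem image_val_neighborSet_pruneLeaf_of_ne (hb : T.neighborSet b = {c})
    (hc : T.neighborSet c = {b, d.1, e.1}) (hde : d ≠ e) {z : ({b, c}ᶜ : Set B)}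
    (hzd : z ≠ d) (hze : z ≠ e) :
    Subtype.val '' (T.pruneLeaf b c d e).neighborSet z = T.neighborSet z := by
  ext y
  simp only [Set.mem_image, mem_neighborSet, pruneLeaf_adj hde]
  constructor
  · rintro ⟨y, h | h, rfl⟩
    · exact h
    · rcases Sym2.eq_iff.1 h with ⟨h, -⟩ | ⟨h, -⟩
      exacts [absurd h hzd, absurd h hze]
  · intro h
    have hyb : y ≠ b := fun hyb => val_ne_right z <| by
      have hzb : T.Adj b z := hyb ▸ h.symm
      rwa [← mem_neighborSet, hb] at hzb
    have hyc : y ≠ c := fun hyc => by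
      have hzc : T.Adj c z := hyc ▸ h.symm
      rw [← mem_neighborSet, hc] at hzc
      rcases hzc with h | h | h
      exacts [val_ne_left z h, hzd (Subtype.ext h), hze (Subtype.ext h)]
    exact ⟨⟨y, by simp [hyb, hyc]⟩, .inl h, rfl⟩

theorem ncard_neighborSet_pruneLeaf_left [Finite B] (hT : T.IsAcyclic)
    (hb : T.neighborSet b = {c}) (hc : T.neighborSet c = {b, d.1, e.1}) (hde : d ≠ e) :
    ((T.pruneLeaf b c d e).neighborSet d).ncard = (T.neighborSet d).ncard := by
  have hcd := adj_of_neighborSet_eq_insert_pair_left hc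
  have hce := adj_of_neighborSet_eq_insert_pair_right hc
  rw [← Set.ncard_image_of_injective _ Subtype.val_injective,
    image_val_neighborSet_pruneLeaf_left hb hde,
    Set.ncard_insert_of_notMem fun h => hT.not_adj_of_adj_of_adj hcd hce h.1,
    Set.ncard_sdiff_singleton_add_one (s := T.neighborSet d) hcd.symm]

theorem ncard_neighborSet_pruneLeaf [Finite B] (hT : T.IsAcyclic)
    (hb : T.neighborSet b = {c}) (hc : T.neighborSet c = {b, d.1, e.1}) (hde : d ≠ e)
    (z : ({b, c}ᶜ : Set B)) :
    ((T.pruneLeaf b c d e).neighborSet z).ncard = (T.neighborSet z).ncard := by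
  by_cases hzd : z = d
  · rw [hzd, ncard_neighborSet_pruneLeaf_left hT hb hc hde]
  by_cases hze : z = e
  · rw [hze, pruneLeaf_comm,
      ncard_neighborSet_pruneLeaf_left hT hb (by rw [hc, Set.pair_comm]) hde.symm]
  rw [← Set.ncard_image_of_injective _ Subtype.val_injective,
    image_val_neighborSet_pruneLeaf_of_ne hb hc hde hzd hze]

theorem IsSubcubicTree.pruneLeaf [Finite B] (hT : T.IsSubcubicTree)
    (hb : T.neighborSet b = {c}) (hc : T.neighborSet c = {b, d.1, e.1}) (hde : d ≠ e) :
    (T.pruneLeaf b c d e).IsSubcubicTree :=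
  ⟨hT.1.pruneLeaf hb hc hde, fun z => by
    rw [ncard_neighborSet_pruneLeaf hT.1.isAcyclic hb hc hde]
    exact hT.2 z⟩

end PruneLeaf

end SimpleGraph

theorem Set.exists_eq_insert_pair_of_ncard_eq_three {α : Type*} {s : Set α} {a : α}
    (hs : s.ncard = 3) (ha : a ∈ s) : ∃ x y, x ≠ y ∧ x ≠ a ∧ y ≠ a ∧ s = {a, x, y} := by
  obtain ⟨x, y, hxy, hsxy⟩ := Set.ncard_eq_two.1
    (by rw [Set.ncard_sdiff_singleton_of_mem ha, hs] : (s \ {a}).ncard = 2)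
  have hx : x ∈ s \ {a} := hsxy ▸ Or.inl rfl
  have hy : y ∈ s \ {a} := hsxy ▸ Or.inr rfl
  refine ⟨x, y, hxy, hx.2, hy.2, ?_⟩
  rw [← hsxy, Set.insert_sdiff_singleton, Set.insert_eq_of_mem ha]

namespace SimpleGraph

variable {B : Type*} {T : SimpleGraph B}

theorem IsSubcubicTree.ncard_neighborSet_eq_three {b c z : B} (hT : T.IsSubcubicTree)
    (hb : T.neighborSet b = {c}) (hzb : z ≠ b) (hzc : z ≠ c) : (T.neighborSet c).ncard = 3 := by
  refine (hT.2 c).resolve_left fun hc => ?_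
  obtain ⟨b', hc⟩ := Set.ncard_eq_one.1 hc
  have hbc : T.Adj c b := (hb ▸ rfl : c ∈ T.neighborSet b).symm
  obtain rfl : b = b' := (hc ▸ hbc : b ∈ ({b'} : Set B))
  rcases hT.1.connected.preconnected.eq_or_eq_of_neighborSet_eq hb hc z with h | h
  exacts [hzb h, hzc h]

end SimpleGraph

theorem exists_branchDecomp_widthLE_of_bijective {W : Type} {H : SimpleGraph W} {k : ℕ}
    {B : Type} [Finite B] {T : SimpleGraph B} (hT : T.IsSubcubicTree) {ι : W → B}
    (hι : Function.Injective ι) (hleaf : ∀ x, (T.neighborSet (ι x)).ncard = 1)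
    (hsurj : ∀ l, (T.neighborSet l).ncard = 1 → l ∈ Set.range ι)
    (hwidth : ∀ u w, T.Adj u w → mmVal H (ι ⁻¹' T.edgeSide u w) ≤ k) :
    ∃ D : BranchDecomp H, D.widthLE k := by
  let L := Equiv.ofBijective (fun x => (⟨ι x, hleaf x⟩ : {b // (T.neighborSet b).ncard = 1}))
    ⟨fun x y h => hι (congrArg Subtype.val h), fun l =>
      (hsurj l.1 l.2).imp fun _ h => Subtype.ext h⟩
  exact ⟨⟨B, inferInstance, T, hT.1, hT.2, L.symm⟩, hwidth⟩

theorem exists_branchDecomp_widthLE_of_injective {W : Type} {H : SimpleGraph W} {k : ℕ}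
    (hW : 2 ≤ Nat.card W) {B : Type} [Finite B] {T : SimpleGraph B} (hT : T.IsSubcubicTree)
    {ι : W → B} (hι : Function.Injective ι) (hleaf : ∀ x, (T.neighborSet (ι x)).ncard = 1)
    (hwidth : ∀ u w, T.Adj u w → mmVal H (ι ⁻¹' T.edgeSide u w) ≤ k) :
    ∃ D : BranchDecomp H, D.widthLE k := by
  induction hn : Nat.card B using Nat.strong_induction_on generalizing B with
  | _ n ih =>
    by_cases hsurj : ∀ l, (T.neighborSet l).ncard = 1 → l ∈ Set.range ι
    · exact exists_branchDecomp_widthLE_of_bijective hT hι hleaf hsurj hwidth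
    push Not at hsurj
    obtain ⟨b, hb, hbι⟩ := hsurj
    obtain ⟨c, hbc⟩ := Set.ncard_eq_one.1 hb
    have : Finite W := Nat.finite_of_card_ne_zero (by omega)
    obtain ⟨x₁, x₂, hx⟩ := (Finite.one_lt_card_iff_nontrivial.1 hW).exists_pair_ne
    have hιb : ∀ x, ι x ≠ b := fun x h => hbι ⟨x, h⟩
    have hc : (T.neighborSet c).ncard = 3 := by
      by_cases h₁ : ι x₁ = c
      · exact hT.ncard_neighborSet_eq_three hbc (hιb x₂) fun h₂ => hx (hι (h₁.trans h₂.symm))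
      · exact hT.ncard_neighborSet_eq_three hbc (hιb x₁) h₁
    have hιc : ∀ x, ι x ≠ c := fun x h => by simpa [h, hc] using hleaf x
    obtain ⟨d, e, hde, hdb, heb, hcde⟩ :=
      Set.exists_eq_insert_pair_of_ncard_eq_three hc (hbc ▸ rfl : c ∈ T.neighborSet b).symm
    have hcd := adj_of_neighborSet_eq_insert_pair_left hcde
    have hce := adj_of_neighborSet_eq_insert_pair_right hcde
    let d' : ({b, c}ᶜ : Set B) := ⟨d, by simp [hdb, hcd.ne.symm]⟩
    let e' : ({b, c}ᶜ : Set B) := ⟨e, by simp [heb, hce.ne.symm]⟩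
    have hde' : d' ≠ e' := fun h => hde (congrArg Subtype.val h)
    refine ih _ (hn ▸ Finite.card_subtype_lt (x := b) (by simp)) (hT.pruneLeaf hbc hcde hde')
      (ι := fun x => ⟨ι x, by simp [hιb x, hιc x]⟩) (fun x y h => hι (congrArg Subtype.val h))
      (fun x => (ncard_neighborSet_pruneLeaf hT.1.isAcyclic hbc hcde hde' _).trans (hleaf x))
      (fun u w huw => ?_) rfl
    obtain ⟨u₀, w₀, huw₀, hside⟩ :=
      exists_edgeSide_pruneLeaf_eq_preimage hT.1.isAcyclic hbc hcde hde' huw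
    rw [hside]
    exact hwidth u₀ w₀ huw₀

theorem mmw_le_of_widthLE {V : Type*} {G : SimpleGraph V} {k : ℕ} (D : BranchDecomp G)
    (hD : D.widthLE k) : mmw G ≤ k :=
  Nat.sInf_le ⟨D, hD⟩

theorem mmw_eq_zero_of_card_lt_two {V : Type*} {G : SimpleGraph V} (hV : Nat.card V < 2) :
    mmw G = 0 := by
  rw [mmw, Nat.sInf_eq_zero]
  exact .inr (Set.eq_empty_of_forall_notMem fun _ ⟨D, _⟩ => hV.not_ge D.two_le_card)

theorem exists_branchDecomp_widthLE_of_mmw_le {V : Type} [Finite V] {G : SimpleGraph V} {k : ℕ}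
    (hV : 2 ≤ Nat.card V) (hk : mmw G ≤ k) : ∃ D : BranchDecomp G, D.widthLE k := by
  obtain ⟨D⟩ := nonempty_branchDecomp G hV
  obtain ⟨D', hD'⟩ := Nat.sInf_mem (s := {k | ∃ D : BranchDecomp G, D.widthLE k})
    ⟨_, D, fun u w _ => mmVal_le_card G (D.side u w)⟩
  exact ⟨D', fun u w huw => (hD' u w huw).trans hk⟩

/-- graphs of mm-width at most `k` are closed under taking minors. -/
theorem mmw_minor_closed (k : ℕ) :
    ∀ (V W : Type) [Finite V] [Finite W] (G : SimpleGraph V) (H : SimpleGraph W),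
      IsMinor H G → mmw G ≤ k → mmw H ≤ k := by
  intro V W _ _ G H ⟨φ, hne, hconn, hdisj, hadj⟩ hG
  obtain hW | hW := lt_or_ge (Nat.card W) 2
  · exact (mmw_eq_zero_of_card_lt_two hW).trans_le k.zero_le
  choose r hr using hne
  have hr_inj : Function.Injective r := fun x y hxy =>
    of_not_not fun hxy' => Set.disjoint_left.1 (hdisj x y hxy') (hr x) (hxy ▸ hr y)
  obtain ⟨D, hD⟩ :=
    exists_branchDecomp_widthLE_of_mmw_le (hW.trans (Nat.card_le_card_of_injective r hr_inj)) hG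
  have := D.finB
  obtain ⟨D', hD'⟩ := exists_branchDecomp_widthLE_of_injective hW (T := D.T) ⟨D.isTree, D.subcubic⟩
    (ι := fun x => (D.L.symm (r x)).1) (fun x y h => hr_inj (D.L.symm.injective (Subtype.ext h)))
    (fun x => (D.L.symm (r x)).2)
    fun u w huw =>
      (mmVal_preimage_le_of_branchSets hconn hdisj hadj hr (D.side u w)).trans (hD u w huw)
  exact mmw_le_of_widthLE D' hD'
end

section
/- If every block (maximal 2-connected subgraph or bridge) of a graph G is isomorphic to K2 or to the triangle C3, then the maximum matching width of G is at most 1. -/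
open SimpleGraph

/-!
The vertex set of a cycle is 2-connected, so it lies in a block; hence every cycle of `G` has
length at most 3. In such a graph the end `x` of a longest path, with successor `y`, is either
a pendant vertex at `y` or lies in a triangle `x y q` in which `q` is the only other neighbour
of `x` and of `y`. By induction `G - x` has a branch-decomposition of width 1, and turning the
leaf of `y` into an inner node carrying the leaves `x` and `y` gives one of `G`: the new cuts
separate a single vertex, and an old cut receives `x` on the side of `y`, which in both
configurations keeps any two crossing edges sharing an endpoint. A graph with at most one
vertex has no branch-decomposition (a subcubic tree with a leaf has at least two), so its `mmw`
is `sInf ∅ = 0`.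
-/

namespace SimpleGraph

variable {V : Type} {G : SimpleGraph V}

section

variable [Finite V] {A : Set V}

theorem mmVal_le_one_iff : mmVal G A ≤ 1 ↔
    ∀ ⦃p q p' q'⦄, p ∈ A → q ∉ A → G.Adj p q → p' ∈ A → q' ∉ A → G.Adj p' q' →
      p = p' ∨ q = q' := by
  classical
  constructor
  · intro h p q p' q' hp hq hpq hp' hq' hpq'
    by_contra! hne
    have := Fintype.ofFinite (V × V)
    have h2 : 2 ≤ mmVal G A :=
      le_csSup ⟨Fintype.card (V × V), by rintro _ ⟨M, -, -, rfl⟩; exact M.card_le_univ⟩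
        ⟨{(p, q), (p', q')}, by grind, by grind, Finset.card_pair (by grind)⟩
    omega
  · intro h
    refine csSup_le ⟨0, ∅, by simp, by simp, rfl⟩ ?_
    rintro _ ⟨M, hA, hM, rfl⟩
    refine Finset.card_le_one.mpr fun e he e' he' => ?_
    by_contra hee'
    obtain ⟨hp, hq, hpq⟩ := hA e he
    obtain ⟨hp', hq', hpq'⟩ := hA e' he'
    grind

theorem mmVal_le_one_of_forall_eq_or_eq (v : V)
    (h : ∀ ⦃p q⦄, p ∈ A → q ∉ A → G.Adj p q → p = v ∨ q = v) : mmVal G A ≤ 1 :=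
  mmVal_le_one_iff.mpr fun p q p' q' hp hq _ hp' hq' _ => by grind

end

def CircumferenceLE (G : SimpleGraph V) (n : ℕ) : Prop :=
  ∀ ⦃u : V⦄ (c : G.Walk u u), c.IsCycle → c.length ≤ n

theorem CircumferenceLE.induce {n : ℕ} (h : G.CircumferenceLE n) (s : Set V) :
    (G.induce s).CircumferenceLE n := fun _ c hc => by
  simpa only [Walk.length_map] using
    h _ (hc.map (f := (Embedding.induce (G := G) s).toHom)
      (Embedding.induce (G := G) s).injective)

theorem Walk.IsPath.notMem_edges_of_two_le_length {u v : V} {p : G.Walk u v} (hp : p.IsPath)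
    (h2 : 2 ≤ p.length) : s(v, u) ∉ p.edges := by
  cases p with
  | nil => simp at h2
  | cons h p =>
    rw [cons_isPath_iff] at hp
    simp only [edges_cons, List.mem_cons, Sym2.eq_iff, not_or]
    refine ⟨⟨fun ⟨_, huv⟩ => h.ne huv, ?_⟩, fun he => hp.2 (p.snd_mem_support_of_mem_edges he)⟩
    rintro ⟨rfl, -⟩
    cases p with
    | nil => simp at h2
    | cons h' p' => exact ((cons_isPath_iff _ _).mp hp.1).2 p'.end_mem_support

theorem CircumferenceLE.length_lt_of_adj {n : ℕ} (hC : G.CircumferenceLE n) {u v : V}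
    {p : G.Walk u v} (hp : p.IsPath) (hvu : G.Adj v u) (h2 : 2 ≤ p.length) : p.length < n := by
  have := hC _ ((Walk.cons_isCycle_iff p hvu).mpr ⟨hp, hp.notMem_edges_of_two_le_length h2⟩)
  simp only [Walk.length_cons] at this
  omega

open Walk in
theorem Walk.IsCycle.connected_induce_support_diff_singleton {u x : V} {c : G.Walk u u}
    (hc : c.IsCycle) (hx : x ∈ c.support) :
    (G.induce ({v | v ∈ c.support} \ {x})).Connected := by
  classical
  set c' := c.rotate x hx
  have hc' : c'.IsCycle := hc.rotate hx
  set p := c'.tail.reverse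
  have hpnil : ¬ p.Nil := fun h => (c'.adj_snd hc'.not_nil).ne h.eq
  have hxp : x ∉ p.tail.support := by
    have hp : p.IsPath := hc'.isPath_tail.reverse
    rw [← p.cons_tail_eq hpnil, cons_isPath_iff] at hp
    exact hp.2
  have hsupp : ∀ v, v ∈ c.support ↔ v = x ∨ v ∈ p.tail.support := fun v => by
    have hp : v ∈ c'.tail.support ↔ v ∈ p.support := by
      simp only [p, support_reverse, List.mem_reverse]
    rw [← c.mem_support_rotate_iff x hx, ← c'.cons_support_tail hc'.not_nil, List.mem_cons, hp,
      ← p.cons_support_tail hpnil, List.mem_cons, ← or_assoc, or_self]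
  have hS : {v | v ∈ c.support} \ {x} = {v | v ∈ p.tail.support} := by
    ext v
    simp only [Set.mem_sdiff, Set.mem_ofPred_eq, Set.mem_singleton_iff, hsupp]
    grind
  rw [hS]
  exact p.tail.connected_induce_support

theorem kConnected_two_induce_of_connected {S : Set V} (h2 : 2 ≤ S.ncard)
    (hconn : (G.induce S).Connected) (hdel : ∀ x ∈ S, (G.induce (S \ {x})).Connected) :
    KConnected 2 (G.induce S) := by
  have := (Set.finite_of_ncard_pos (by omega : 0 < S.ncard)).to_subtype
  refine ⟨by rwa [Nat.card_coe_set_eq], fun X hX => ?_⟩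
  have transfer (T : Set V) (hT : ∀ v, v ∈ T ↔ ∃ h : v ∈ S, (⟨v, h⟩ : S) ∉ X)
      (hT' : (G.induce T).Connected) : ((G.induce S).induce Xᶜ).Connected := by
    refine hT'.map (⟨fun v => ⟨⟨v, ((hT v).1 v.2).1⟩, ((hT v).1 v.2).2⟩, fun h => h⟩ :
      G.induce T →g (G.induce S).induce Xᶜ) ?_
    rintro ⟨⟨v, hv⟩, hvX⟩
    exact ⟨⟨v, (hT v).2 ⟨hv, hvX⟩⟩, rfl⟩
  obtain hX0 | hX1 : X.ncard = 0 ∨ X.ncard = 1 := by omega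
  · rw [Set.ncard_eq_zero] at hX0
    exact transfer S (by simp [hX0]) hconn
  · obtain ⟨⟨x, hx⟩, rfl⟩ := Set.ncard_eq_one.mp hX1
    refine transfer _ (fun v => ?_) (hdel x hx)
    simp only [Set.mem_sdiff, Set.mem_singleton_iff, Subtype.mk.injEq]
    grind

theorem Walk.IsCycle.length_le_ncard_support {u : V} {c : G.Walk u u} (hc : c.IsCycle) :
    c.length ≤ {v | v ∈ c.support}.ncard := by
  classical
  calc c.length = c.support.tail.toFinset.card := by
        rw [List.toFinset_card_of_nodup hc.support_nodup, List.length_tail, length_support]; rfl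
    _ = (c.support.tail.toFinset : Set V).ncard := (Set.ncard_coe_finset _).symm
    _ ≤ _ := Set.ncard_le_ncard (fun v hv => List.mem_of_mem_tail (by simpa using hv))
        c.support.finite_toSet

theorem Walk.IsCycle.kConnected_two_induce_support {u : V} {c : G.Walk u u} (hc : c.IsCycle) :
    KConnected 2 (G.induce {v | v ∈ c.support}) :=
  kConnected_two_induce_of_connected (by linarith [hc.three_le_length, hc.length_le_ncard_support])
    c.connected_induce_support fun _ hx => hc.connected_induce_support_diff_singleton hx

theorem circumferenceLE_of_forall_isBlock_ncard_le [Finite V] {n : ℕ}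
    (h : ∀ Bs, IsBlock G Bs → Bs.ncard ≤ n) : G.CircumferenceLE n := by
  intro u c hc
  obtain ⟨Bs, hsub, hmax⟩ := Finite.exists_le_maximal (p := fun B => KConnected 2 (G.induce B))
    hc.kConnected_two_induce_support
  have hblock : IsBlock G Bs := Or.inr ⟨hmax.prop, fun B' hB' hK => hmax.eq_of_ge hK hB'⟩
  calc c.length ≤ {v | v ∈ c.support}.ncard := hc.length_le_ncard_support
    _ ≤ Bs.ncard := Set.ncard_le_ncard hsub
    _ ≤ n := h Bs hblock

theorem CircumferenceLE.eq_of_adj_of_mem_support (hC : G.CircumferenceLE 3) {a b c z q : V}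
    {p : G.Walk c z} (hp : p.IsPath) (hab : G.Adj a b) (hbc : G.Adj b c) (ha : a ∉ p.support)
    (hb : b ∉ p.support) (hq : q ∈ p.support) (haq : G.Adj a q) : q = c := by
  classical
  have hW : (Walk.cons hab (Walk.cons hbc (p.takeUntil q hq))).IsPath := by
    simp only [Walk.cons_isPath_iff, Walk.support_cons, List.mem_cons, not_or]
    exact ⟨⟨hp.takeUntil hq, fun h => hb (p.support_takeUntil_subset_support hq h)⟩, hab.ne,
      fun h => ha (p.support_takeUntil_subset_support hq h)⟩
  have := hC.length_lt_of_adj hW haq.symm (by simp)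
  exact (Walk.eq_of_length_eq_zero (p := p.takeUntil q hq) (by simp at this; omega)).symm

/-- Satisfied when `x` is a pendant vertex at `y`, and when `x y q` is a triangle in which `q` is
the only other neighbour of `x` and of `y`. -/
def HangsOn (G : SimpleGraph V) (x y : V) : Prop :=
  ∀ ⦃q⦄, G.Adj x q → q ≠ y → G.Adj y q ∧ ∀ ⦃q'⦄, G.Adj y q' → q' = x ∨ q' = q

open Walk in
theorem CircumferenceLE.exists_hangsOn [Finite V] [Nontrivial V] (hC : G.CircumferenceLE 3) :
    ∃ x y, y ≠ x ∧ G.HangsOn x y := by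
  obtain ⟨x, z, p, hp, hmax⟩ := exists_isPath_forall_isPath_length_le_length G
  have hnbr : ∀ ⦃q⦄, G.Adj x q → q ∈ p.support := fun q hq => by
    by_contra hq'
    have := hmax _ _ _ (hp.cons (p := p) (h := hq.symm) hq')
    simp at this
  cases p with
  | nil =>
    obtain ⟨y, hy⟩ := exists_ne x
    exact ⟨x, y, hy, fun q hq => absurd (hnbr hq) (by simpa using hq.ne')⟩
  | @cons _ v1 _ h1 p1 =>
  cases p1 with
  | nil => exact ⟨x, _, h1.ne', fun q hq hqy => absurd (hnbr hq) (by simp [hq.ne', hqy])⟩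
  | @cons _ v2 _ h2 p2 =>
  simp only [cons_isPath_iff, support_cons, List.mem_cons, not_or] at hp
  obtain ⟨⟨hp2, hv1⟩, hxv1, hx⟩ := hp
  refine ⟨x, v1, h1.ne', fun q hq hqv1 => ?_⟩
  obtain rfl : q = v2 :=
    hC.eq_of_adj_of_mem_support hp2 h1 h2 hx hv1 (by simpa [hq.ne', hqv1] using hnbr hq) hq
  refine ⟨h2, fun q' hv1q' => ?_⟩
  by_contra! ⟨hq'x, hq'q⟩
  by_cases hq'2 : q' ∈ p2.support
  · exact hq'q (hC.eq_of_adj_of_mem_support hp2 h1.symm hq hv1 hx hq'2 hv1q')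
  · have hW : (cons hv1q'.symm (cons h1.symm (cons hq p2))).IsPath := by
      simp only [cons_isPath_iff, support_cons, List.mem_cons, not_or]
      exact ⟨⟨⟨hp2, hx⟩, fun h => hxv1 h.symm, hv1⟩, hv1q'.ne', hq'x, hq'2⟩
    have := hmax _ _ _ hW
    simp at this

section

variable {x y : V}

open Classical in
noncomputable def collapse (hy : y ≠ x) (v : V) : ({x}ᶜ : Set V) :=
  if h : v = x then ⟨y, Set.mem_compl_singleton_iff.mpr hy⟩ else ⟨v, h⟩

@[simp] theorem coe_collapse_self (hy : y ≠ x) : (collapse hy x : V) = y := by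
  simp [collapse]

theorem coe_collapse_of_ne (hy : y ≠ x) {v : V} (hv : v ≠ x) : (collapse hy v : V) = v := by
  simp [collapse, hv]

theorem HangsOn.adj_collapse (h : G.HangsOn x y) (hy : y ≠ x) {a b : V} (hab : G.Adj a b)
    (hne : collapse hy a ≠ collapse hy b) : G.Adj (collapse hy a) (collapse hy b) := by
  rw [Ne, Subtype.ext_iff] at hne
  rcases eq_or_ne x a with rfl | ha <;> rcases eq_or_ne b x with hb | hb
  · exact absurd hb hab.ne'
  · rw [coe_collapse_self, coe_collapse_of_ne hy hb] at hne ⊢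
    exact (h hab fun e => hne e.symm).1
  · rw [hb, coe_collapse_self, coe_collapse_of_ne hy ha.symm] at hne ⊢
    exact (h (hb ▸ hab.symm) hne).1.symm
  · rwa [coe_collapse_of_ne hy ha.symm, coe_collapse_of_ne hy hb]

theorem collapse_eq_collapse_iff (hy : y ≠ x) {a b : V} :
    collapse hy a = collapse hy b ↔ a = b ∨ (x = a ∧ y = b) ∨ (y = a ∧ x = b) := by
  rw [Subtype.ext_iff]
  rcases eq_or_ne a x with ha | ha <;> rcases eq_or_ne b x with hb | hb <;>
    simp only [ha, hb, coe_collapse_self, coe_collapse_of_ne hy, ne_eq, not_false_eq_true] <;>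
    grind

theorem HangsOn.eq_or_eq_of_collapse_eq (h : G.HangsOn x y) (hy : y ≠ x) {a a' b b' : V}
    (hab : G.Adj a b) (hab' : G.Adj a' b') (hb : collapse hy b ≠ collapse hy a)
    (hb' : collapse hy b' ≠ collapse hy a') (he : collapse hy a = collapse hy a') :
    a = a' ∨ b = b' := by
  have hxy : collapse hy x = collapse hy y := (collapse_eq_collapse_iff hy).mpr (by simp)
  rcases (collapse_eq_collapse_iff hy).mp he with rfl | ⟨rfl, rfl⟩ | ⟨rfl, rfl⟩
  · exact .inl rfl
  · have hby : b ≠ y := fun e => hb (e ▸ hxy.symm)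
    have hb'x : b' ≠ x := fun e => hb' (e ▸ hxy)
    exact .inr (((h hab hby).2 hab').resolve_left hb'x).symm
  · have hbx : b ≠ x := fun e => hb (e ▸ hxy)
    have hb'y : b' ≠ y := fun e => hb' (e ▸ hxy.symm)
    exact .inr (((h hab' hb'y).2 hab).resolve_left hbx)

theorem HangsOn.mmVal_preimage_collapse_le_one [Finite V] (h : G.HangsOn x y) (hy : y ≠ x)
    {A : Set ({x}ᶜ : Set V)} (hA : mmVal (G.induce {x}ᶜ) A ≤ 1) :
    mmVal G (collapse hy ⁻¹' A) ≤ 1 := by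
  rw [mmVal_le_one_iff] at hA ⊢
  intro p q p' q' hp hq hpq hp' hq' hpq'
  have hne : ∀ {a b}, a ∈ collapse hy ⁻¹' A → b ∉ collapse hy ⁻¹' A →
      collapse hy b ≠ collapse hy a := fun ha hb he => hb (by simpa [he] using ha)
  rcases hA hp hq (h.adj_collapse hy hpq (hne hp hq).symm) hp' hq'
    (h.adj_collapse hy hpq' (hne hp' hq').symm) with he | he
  · exact h.eq_or_eq_of_collapse_eq hy hpq hpq' (hne hp hq) (hne hp' hq') he
  · exact (h.eq_or_eq_of_collapse_eq hy hpq.symm hpq'.symm (hne hp hq).symm (hne hp' hq').symm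
      he).symm

end

section

variable {B W : Type}

theorem Reachable.map_of_eq_or_adj {H : SimpleGraph W} (f : V → W)
    (hf : ∀ ⦃a b⦄, G.Adj a b → f a = f b ∨ H.Adj (f a) (f b)) {a b : V} (h : G.Reachable a b) :
    H.Reachable (f a) (f b) := by
  rw [reachable_iff_reflTransGen] at h ⊢
  refine h.lift' f fun a b hab => show Relation.ReflTransGen H.Adj (f a) (f b) from ?_
  rcases hf hab with he | hadj
  · rw [he]
  · exact .single hadj

def addTwoLeaves (T : SimpleGraph B) (ℓ : B) : SimpleGraph (B ⊕ Bool) where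
  Adj
    | .inl a, .inl b => T.Adj a b
    | .inl a, .inr _ => a = ℓ
    | .inr _, .inl b => b = ℓ
    | .inr _, .inr _ => False
  symm := ⟨by rintro (a | i) (b | j) h <;> simp_all [T.adj_comm]⟩
  loopless := ⟨by rintro (a | i) h <;> simp_all⟩

variable {T : SimpleGraph B} {ℓ : B}

@[simp] theorem addTwoLeaves_adj_inl_inl {a b : B} :
    (T.addTwoLeaves ℓ).Adj (.inl a) (.inl b) ↔ T.Adj a b := .rfl
@[simp] theorem addTwoLeaves_adj_inl_inr {a : B} {i : Bool} :
    (T.addTwoLeaves ℓ).Adj (.inl a) (.inr i) ↔ a = ℓ := .rfl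
@[simp] theorem addTwoLeaves_adj_inr_inl {b : B} {i : Bool} :
    (T.addTwoLeaves ℓ).Adj (.inr i) (.inl b) ↔ b = ℓ := .rfl
@[simp] theorem addTwoLeaves_adj_inr_inr {i j : Bool} :
    ¬ (T.addTwoLeaves ℓ).Adj (.inr i) (.inr j) := id

theorem addTwoLeaves_reachable_deleteEdges_inl {u w : B} {p q : B ⊕ Bool} :
    ((T.addTwoLeaves ℓ).deleteEdges {s(.inl u, .inl w)}).Reachable p q ↔
      (T.deleteEdges {s(u, w)}).Reachable (Sum.elim id (fun _ => ℓ) p)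
        (Sum.elim id (fun _ => ℓ) q) := by
  constructor
  · refine Reachable.map_of_eq_or_adj _ ?_
    rintro (a | i) (b | j) hab <;> simp_all
  · let φ : T.deleteEdges {s(u, w)} →g (T.addTwoLeaves ℓ).deleteEdges {s(.inl u, .inl w)} :=
      ⟨Sum.inl, by simp_all⟩
    have hp : ∀ p, ((T.addTwoLeaves ℓ).deleteEdges {s(.inl u, .inl w)}).Reachable p
        (.inl (Sum.elim id (fun _ => ℓ) p)) := by
      rintro (a | i)
      · rfl
      · exact Adj.reachable (by simp)
    exact fun h => (hp p).trans ((h.map φ).trans (hp q).symm)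

theorem addTwoLeaves_reachable_deleteEdges_inr_iff {i : Bool} {p : B ⊕ Bool} :
    ((T.addTwoLeaves ℓ).deleteEdges {s(.inl ℓ, .inr i)}).Reachable p (.inr i) ↔ p = .inr i := by
  refine ⟨fun h => ?_, by rintro rfl; rfl⟩
  have := h.map_of_eq_or_adj (H := ⊥) (· = Sum.inr i) ?_
  · simpa using this
  rintro (a | j) (b | k) hab <;> simp_all
  tauto

theorem addTwoLeaves_reachable_deleteEdges_inl_self_iff (hT : T.Connected) {i : Bool}
    {p : B ⊕ Bool} :
    ((T.addTwoLeaves ℓ).deleteEdges {s(.inl ℓ, .inr i)}).Reachable p (.inl ℓ) ↔ p ≠ .inr i := by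
  refine ⟨?_, fun hp => ?_⟩
  · rintro h rfl
    simpa using addTwoLeaves_reachable_deleteEdges_inr_iff.mp h.symm
  rcases p with a | j
  · exact (hT.preconnected a ℓ).map ⟨Sum.inl, by simp_all⟩
  · exact Adj.reachable (by simp_all)

theorem Connected.addTwoLeaves (hT : T.Connected) : (T.addTwoLeaves ℓ).Connected := by
  refine connected_iff_exists_forall_reachable _ |>.mpr ⟨.inl ℓ, ?_⟩
  rintro (a | i)
  · exact (hT.preconnected ℓ a).map ⟨Sum.inl, by simp⟩
  · exact Adj.reachable (by simp)

theorem IsTree.addTwoLeaves (hT : T.IsTree) : (T.addTwoLeaves ℓ).IsTree := by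
  refine ⟨hT.connected.addTwoLeaves, isAcyclic_iff_forall_adj_isBridge.mpr ?_⟩
  rintro (a | i) (b | j) hab <;> simp only [addTwoLeaves_adj_inl_inl, addTwoLeaves_adj_inl_inr,
    addTwoLeaves_adj_inr_inl, addTwoLeaves_adj_inr_inr] at hab
  · rw [isBridge_iff, addTwoLeaves_reachable_deleteEdges_inl]
    exact isAcyclic_iff_forall_adj_isBridge.mp hT.isAcyclic hab
  · subst hab
    rw [isBridge_iff, addTwoLeaves_reachable_deleteEdges_inr_iff]
    simp
  · subst hab
    rw [isBridge_iff, Sym2.eq_swap, ← reachable_comm, addTwoLeaves_reachable_deleteEdges_inr_iff]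
    simp

theorem addTwoLeaves_neighborSet_inr (i : Bool) :
    (T.addTwoLeaves ℓ).neighborSet (.inr i) = {.inl ℓ} := by
  ext (b | j) <;> simp [eq_comm]

theorem addTwoLeaves_neighborSet_inl_self :
    (T.addTwoLeaves ℓ).neighborSet (.inl ℓ) =
      insert (.inr false) (insert (.inr true) (Sum.inl '' T.neighborSet ℓ)) := by
  ext (b | _ | _) <;> simp

theorem addTwoLeaves_neighborSet_inl_of_ne {a : B} (ha : a ≠ ℓ) :
    (T.addTwoLeaves ℓ).neighborSet (.inl a) = Sum.inl '' T.neighborSet a := by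
  ext (b | j) <;> simp [ha]

theorem addTwoLeaves_ncard_neighborSet_inr (i : Bool) :
    ((T.addTwoLeaves ℓ).neighborSet (.inr i)).ncard = 1 := by
  rw [addTwoLeaves_neighborSet_inr, Set.ncard_singleton]

theorem addTwoLeaves_ncard_neighborSet_inl_self [Finite B] :
    ((T.addTwoLeaves ℓ).neighborSet (.inl ℓ)).ncard = (T.neighborSet ℓ).ncard + 2 := by
  rw [addTwoLeaves_neighborSet_inl_self, Set.ncard_insert_of_notMem (by simp),
    Set.ncard_insert_of_notMem (by simp), Set.ncard_image_of_injective _ Sum.inl_injective]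

theorem addTwoLeaves_ncard_neighborSet_inl_of_ne {a : B} (ha : a ≠ ℓ) :
    ((T.addTwoLeaves ℓ).neighborSet (.inl a)).ncard = (T.neighborSet a).ncard := by
  rw [addTwoLeaves_neighborSet_inl_of_ne ha, Set.ncard_image_of_injective _ Sum.inl_injective]

end

end SimpleGraph

namespace BranchDecomp

variable {V : Type} {G : SimpleGraph V}

noncomputable def ofLeafEmbedding {B : Type} [Finite B] (T : SimpleGraph B) (hT : T.IsTree)
    (hdeg : ∀ b, (T.neighborSet b).ncard = 1 ∨ (T.neighborSet b).ncard = 3) (g : V → B)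
    (hg : g.Injective) (hleaf : ∀ b, (T.neighborSet b).ncard = 1 ↔ b ∈ Set.range g) :
    BranchDecomp G where
  B := B
  finB := inferInstance
  T := T
  isTree := hT
  subcubic := hdeg
  L := (Equiv.ofBijective (fun v => ⟨g v, (hleaf _).2 ⟨v, rfl⟩⟩)
    ⟨fun _ _ h => hg (congrArg Subtype.val h), fun ⟨b, hb⟩ => by
      obtain ⟨v, rfl⟩ := (hleaf b).1 hb
      exact ⟨v, rfl⟩⟩).symm

theorem exists_widthLE_one_of_card_eq_two [Finite V] (h2 : Nat.card V = 2) :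
    ∃ D : BranchDecomp G, D.widthLE 1 := by
  obtain ⟨a, b, hab, huniv⟩ := Nat.card_eq_two_iff.mp h2
  have hmem (z : V) : z = a ∨ z = b := by
    have hz : z ∈ ({a, b} : Set V) := huniv ▸ Set.mem_univ z
    simpa using hz
  have : Nonempty V := ⟨a⟩
  have htree : (⊤ : SimpleGraph V).IsTree :=
    ⟨connected_top, .of_card_le_two (by simp [ENat.card_eq_coe_natCard, h2])⟩
  have hdeg (v : V) : ((⊤ : SimpleGraph V).neighborSet v).ncard = 1 := by
    rw [neighborSet_top, Set.ncard_compl, h2, Set.ncard_singleton]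
  refine ⟨ofLeafEmbedding ⊤ htree (fun v => .inl (hdeg v)) id Function.injective_id
    (fun v => iff_of_true (hdeg v) ⟨v, rfl⟩), fun _ _ _ => mmVal_le_one_iff.mpr ?_⟩
  intro p q p' q' hp hq hpq hp' hq' _
  have : p' ≠ q := fun e => hq (e ▸ hp')
  grind [hmem p, hmem q, hmem p', hpq.ne]

section

variable {x y : V} (D : BranchDecomp (G.induce {x}ᶜ)) (hy : y ≠ x)

noncomputable def leafOf (v : ({x}ᶜ : Set V)) : D.B := (D.L.symm v).1

theorem leafOf_injective : Function.Injective D.leafOf :=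
  fun _ _ h => D.L.symm.injective (Subtype.ext h)

theorem ncard_neighborSet_leafOf (v : ({x}ᶜ : Set V)) : (D.T.neighborSet (D.leafOf v)).ncard = 1 :=
  (D.L.symm v).2

theorem mem_range_leafOf {b : D.B} (hb : (D.T.neighborSet b).ncard = 1) :
    b ∈ Set.range D.leafOf :=
  ⟨D.L ⟨b, hb⟩, by simp [leafOf]⟩

open Classical in
noncomputable def insertSiblingLeaf (v : V) : D.B ⊕ Bool :=
  if v = x then .inr false else if v = y then .inr true else .inl (D.leafOf (collapse hy v))

theorem elim_insertSiblingLeaf (v : V) :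
    Sum.elim id (fun _ => D.leafOf (collapse hy x)) (D.insertSiblingLeaf hy v) =
      D.leafOf (collapse hy v) := by
  unfold insertSiblingLeaf
  split_ifs with hx hyv
  · simp [hx, collapse]
  · subst hyv; simp [collapse, hy]
  · rfl

theorem insertSiblingLeaf_eq_inl_iff {v : V} {b : D.B} :
    D.insertSiblingLeaf hy v = .inl b ↔ v ≠ x ∧ v ≠ y ∧ D.leafOf (collapse hy v) = b := by
  unfold insertSiblingLeaf
  split_ifs <;> simp_all

theorem exists_insertSiblingLeaf_eq_inr_iff (i : Bool) :
    ∃ z, ∀ v, D.insertSiblingLeaf hy v = .inr i ↔ v = z := by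
  refine ⟨if i then y else x, fun v => ?_⟩
  unfold insertSiblingLeaf
  cases i <;> split_ifs <;> grind

theorem insertSiblingLeaf_injective : Function.Injective (D.insertSiblingLeaf hy) := by
  intro v w h
  rcases hv : D.insertSiblingLeaf hy v with b | i
  · obtain ⟨hvx, -, hvb⟩ := (D.insertSiblingLeaf_eq_inl_iff hy).mp hv
    obtain ⟨hwx, -, hwb⟩ := (D.insertSiblingLeaf_eq_inl_iff hy).mp (h ▸ hv)
    have := congrArg Subtype.val (D.leafOf_injective (hvb.trans hwb.symm))
    rwa [coe_collapse_of_ne hy hvx, coe_collapse_of_ne hy hwx] at this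
  · obtain ⟨z, hz⟩ := D.exists_insertSiblingLeaf_eq_inr_iff hy i
    exact ((hz v).mp hv).trans ((hz w).mp (h ▸ hv)).symm

theorem ncard_neighborSet_addTwoLeaves_eq_one_iff (b : D.B ⊕ Bool) :
    ((D.T.addTwoLeaves (D.leafOf (collapse hy x))).neighborSet b).ncard = 1 ↔
      b ∈ Set.range (D.insertSiblingLeaf hy) := by
  have := D.finB
  rcases b with c | i
  · simp only [Set.mem_range, insertSiblingLeaf_eq_inl_iff]
    by_cases hc : c = D.leafOf (collapse hy x)
    · subst hc
      rw [addTwoLeaves_ncard_neighborSet_inl_self, ncard_neighborSet_leafOf]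
      refine iff_of_false (by omega) ?_
      rintro ⟨v, hvx, hvy, hv⟩
      have := congrArg Subtype.val (D.leafOf_injective hv)
      rw [coe_collapse_of_ne hy hvx, coe_collapse_self] at this
      exact hvy this
    · rw [addTwoLeaves_ncard_neighborSet_inl_of_ne hc]
      refine ⟨fun h => ?_, fun ⟨v, _, _, hv⟩ => hv ▸ D.ncard_neighborSet_leafOf _⟩
      obtain ⟨⟨v, hvx⟩, rfl⟩ := D.mem_range_leafOf h
      refine ⟨v, hvx, fun hvy => hc (congrArg D.leafOf (Subtype.ext ?_)), ?_⟩
      · rw [coe_collapse_self]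
        exact hvy
      rw [show collapse hy v = ⟨v, hvx⟩ from Subtype.ext (coe_collapse_of_ne hy hvx)]
  · obtain ⟨z, hz⟩ := D.exists_insertSiblingLeaf_eq_inr_iff hy i
    exact iff_of_true (addTwoLeaves_ncard_neighborSet_inr i) ⟨z, (hz z).mpr rfl⟩

theorem subcubic_addTwoLeaves (b : D.B ⊕ Bool) :
    ((D.T.addTwoLeaves (D.leafOf (collapse hy x))).neighborSet b).ncard = 1 ∨
      ((D.T.addTwoLeaves (D.leafOf (collapse hy x))).neighborSet b).ncard = 3 := by
  have := D.finB
  rcases b with c | i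
  · by_cases hc : c = D.leafOf (collapse hy x)
    · rw [hc, addTwoLeaves_ncard_neighborSet_inl_self, ncard_neighborSet_leafOf]
      exact .inr rfl
    · rw [addTwoLeaves_ncard_neighborSet_inl_of_ne hc]
      exact D.subcubic c
  · exact .inl (addTwoLeaves_ncard_neighborSet_inr i)

noncomputable def insertSibling : BranchDecomp G :=
  letI := D.finB
  ofLeafEmbedding _ D.isTree.addTwoLeaves (D.subcubic_addTwoLeaves hy) (D.insertSiblingLeaf hy)
    (D.insertSiblingLeaf_injective hy) (D.ncard_neighborSet_addTwoLeaves_eq_one_iff hy)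

theorem side_insertSibling {u w : D.B ⊕ Bool}
    (huw : (D.T.addTwoLeaves (D.leafOf (collapse hy x))).Adj u w) :
    (∃ u' w', D.T.Adj u' w' ∧ (D.insertSibling hy).side u w = collapse hy ⁻¹' D.side u' w') ∨
      ∃ z, (D.insertSibling hy).side u w = {z} ∨ (D.insertSibling hy).side u w = {z}ᶜ := by
  have hside : (D.insertSibling hy).side u w = {v | ((D.T.addTwoLeaves (D.leafOf
      (collapse hy x))).deleteEdges {s(u, w)}).Reachable (D.insertSiblingLeaf hy v) u} := rfl
  rw [hside]
  rcases u with a | i <;> rcases w with b | j <;>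
    simp only [addTwoLeaves_adj_inl_inl, addTwoLeaves_adj_inl_inr, addTwoLeaves_adj_inr_inl,
      addTwoLeaves_adj_inr_inr] at huw
  · refine .inl ⟨a, b, huw, ?_⟩
    ext v
    simp only [Set.mem_ofPred_eq, Set.mem_preimage, addTwoLeaves_reachable_deleteEdges_inl,
      elim_insertSiblingLeaf]
    rfl
  · subst huw
    obtain ⟨z, hz⟩ := D.exists_insertSiblingLeaf_eq_inr_iff hy j
    refine .inr ⟨z, .inr ?_⟩
    ext v
    simp [addTwoLeaves_reachable_deleteEdges_inl_self_iff D.isTree.connected, hz]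
  · subst huw
    obtain ⟨z, hz⟩ := D.exists_insertSiblingLeaf_eq_inr_iff hy i
    refine .inr ⟨z, .inl ?_⟩
    ext v
    simp [Sym2.eq_swap, addTwoLeaves_reachable_deleteEdges_inr_iff, hz]

end

theorem widthLE_insertSibling [Finite V] {x y : V} {D : BranchDecomp (G.induce {x}ᶜ)}
    (hD : D.widthLE 1) (hy : y ≠ x) (h : G.HangsOn x y) : (D.insertSibling hy).widthLE 1 := by
  intro u w huw
  rcases D.side_insertSibling hy huw with ⟨u', w', huw', hs⟩ | ⟨z, hs | hs⟩ <;> rw [hs]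
  · exact h.mmVal_preimage_collapse_le_one hy (hD u' w' huw')
  all_goals exact mmVal_le_one_of_forall_eq_or_eq z (by simp_all)

theorem two_le_card_s4 (D : BranchDecomp G) : 2 ≤ Nat.card V := by
  classical
  have := D.finB
  have : Fintype D.B := Fintype.ofFinite _
  have hdeg (b : D.B) : D.T.degree b = (D.T.neighborSet b).ncard := by
    rw [Set.ncard_eq_toFinset_card', ← card_neighborSet_eq_degree, Set.toFinset_card]
  have : Nontrivial D.B := by
    obtain ⟨b⟩ := D.isTree.connected.nonempty
    by_contra!
    rcases D.subcubic b with h | h <;> simp at h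
  obtain ⟨u, w, huw, hu, hw⟩ := D.isTree.exists_ne_and_degree_eq_one
  rw [hdeg] at hu hw
  rw [← Nat.card_congr D.L]
  exact Finite.one_lt_card_iff_nontrivial.mpr
    ⟨⟨u, hu⟩, ⟨w, hw⟩, fun h => huw (congrArg Subtype.val h)⟩

end BranchDecomp

theorem SimpleGraph.CircumferenceLE.exists_branchDecomp_widthLE_one {V : Type} [Finite V]
    {G : SimpleGraph V} (hC : G.CircumferenceLE 3)
    (hV : 2 ≤ Nat.card V) : ∃ D : BranchDecomp G, D.widthLE 1 := by
  obtain ⟨n, hn⟩ : ∃ n, Nat.card V = n := ⟨_, rfl⟩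
  induction n, hn ▸ hV using Nat.le_induction generalizing V with
  | base => exact BranchDecomp.exists_widthLE_one_of_card_eq_two hn
  | succ n h2n ih =>
    have : Nontrivial V := Finite.one_lt_card_iff_nontrivial.mp (by omega)
    obtain ⟨x, y, hy, hxy⟩ := hC.exists_hangsOn
    have hcard : Nat.card ({x}ᶜ : Set V) = n := by
      rw [Nat.card_coe_set_eq, Set.ncard_compl, hn, Set.ncard_singleton, Nat.add_sub_cancel]
    obtain ⟨D, hD⟩ := ih (hC.induce _) (by omega) hcard
    exact ⟨D.insertSibling hy, BranchDecomp.widthLE_insertSibling hD hy hxy⟩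

/-- if every block of `G` is a `K₂` or a triangle, then `mmw(G) ≤ 1`. -/
theorem mmw_le_one_of_blocks (V : Type) [Finite V] (G : SimpleGraph V)
    (h : ∀ Bs : Set V, IsBlock G Bs →
      (∃ a b : V, a ≠ b ∧ G.Adj a b ∧ Bs = {a, b}) ∨
      (∃ a b c : V, a ≠ b ∧ a ≠ c ∧ b ≠ c ∧ G.Adj a b ∧ G.Adj b c ∧ G.Adj a c ∧
        Bs = {a, b, c})) :
    mmw G ≤ 1 := by
  have hC : G.CircumferenceLE 3 := circumferenceLE_of_forall_isBlock_ncard_le fun Bs hBs => by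
    rcases h Bs hBs with ⟨a, b, -, -, rfl⟩ | ⟨a, b, c, -, -, -, -, -, -, rfl⟩
    · grw [Set.ncard_insert_le, Set.ncard_singleton]; omega
    · grw [Set.ncard_insert_le, Set.ncard_insert_le, Set.ncard_singleton]
  by_cases hV : 2 ≤ Nat.card V
  · obtain ⟨D, hD⟩ := hC.exists_branchDecomp_widthLE_one hV
    exact Nat.sInf_le ⟨D, hD⟩
  · have : {k | ∃ D : BranchDecomp G, D.widthLE k} = ∅ :=
      Set.eq_empty_of_forall_notMem fun _ ⟨D, _⟩ => hV D.two_le_card_s4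
    simp [mmw, this]
end
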